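/- Let A be a real n×n symmetric positive definite matrix, P a real n×s matrix with linearly independent columns, c, xₖ ∈ ℝⁿ, rₖ = c − A xₖ, and let αₖ ∈ ℝˢ be the solution of Pᵀ A P αₖ = Pᵀ rₖ. Define Φ(x) = ½⟨x, A x⟩ − ⟨x, c⟩ and xₖ₊₁ = xₖ + P αₖ. Then Φ(xₖ) − Φ(xₖ₊₁) = ½⟨αₖ, Pᵀ rₖ⟩ ≥ 0, and Φ(xₖ₊₁) < Φ(xₖ) if and only if Pᵀ rₖ ≠ 0. -/

import Mathlib

/-!
Write `p = P αₖ`. The Galerkin condition `Pᵀ A P αₖ = Pᵀ rₖ`, paired with `αₖ`, says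
`⟨p, A p⟩ = ⟨p, rₖ⟩ = ⟨αₖ, Pᵀ rₖ⟩`. Expanding the quadratic `Φ` (here the symmetry of `A` is used)
gives `Φ(xₖ) − Φ(xₖ + p) = ⟨p, rₖ⟩ − ½⟨p, A p⟩`, which is therefore `½⟨p, A p⟩`. Positive
definiteness makes this nonnegative, and zero exactly when `p = 0`, i.e. when `Pᵀ rₖ = 0`.
-/

open Matrix

namespace Matrix

variable {ι κ R : Type*} [Fintype ι] [Fintype κ]

section CommRing

variable [CommRing R]

theorem dotProduct_mulVec_comm_of_transpose_eq {A : Matrix ι ι R} (hA : Aᵀ = A) (x y : ι → R) :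
    x ⬝ᵥ A *ᵥ y = y ⬝ᵥ A *ᵥ x := by
  conv_lhs => rw [← hA]
  exact dotProduct_transpose_mulVec A x y

theorem add_dotProduct_mulVec_add_of_transpose_eq {A : Matrix ι ι R} (hA : Aᵀ = A)
    (x p : ι → R) :
    (x + p) ⬝ᵥ A *ᵥ (x + p) = x ⬝ᵥ A *ᵥ x + 2 * (p ⬝ᵥ A *ᵥ x) + p ⬝ᵥ A *ᵥ p := by
  simp only [mulVec_add, add_dotProduct, dotProduct_add,
    dotProduct_mulVec_comm_of_transpose_eq hA x p]
  ring

theorem mulVec_dotProduct_mulVec_of_galerkin {A : Matrix ι ι R} {P : Matrix ι κ R}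
    {r : ι → R} {α : κ → R} (hα : (Pᵀ * A * P) *ᵥ α = Pᵀ *ᵥ r) :
    (P *ᵥ α) ⬝ᵥ A *ᵥ (P *ᵥ α) = α ⬝ᵥ Pᵀ *ᵥ r := by
  rw [← hα, ← mulVec_mulVec, ← mulVec_mulVec, dotProduct_transpose_mulVec, dotProduct_comm]

end CommRing

theorem quadratic_energy_sub_energy_add [Field R] [NeZero (2 : R)] {A : Matrix ι ι R}
    (hA : Aᵀ = A) (c x p : ι → R) :
    ((1 / 2) * (x ⬝ᵥ A *ᵥ x) - x ⬝ᵥ c) - ((1 / 2) * ((x + p) ⬝ᵥ A *ᵥ (x + p)) - (x + p) ⬝ᵥ c) =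
      p ⬝ᵥ (c - A *ᵥ x) - (1 / 2) * (p ⬝ᵥ A *ᵥ p) := by
  rw [add_dotProduct_mulVec_add_of_transpose_eq hA, add_dotProduct, dotProduct_sub]
  field_simp
  ring

section Ordered

variable [CommRing R] [Preorder R] {A : Matrix ι ι R}

theorem dotProduct_mulVec_self_nonneg (hA : ∀ x : ι → R, x ≠ 0 → 0 < x ⬝ᵥ A *ᵥ x)
    (x : ι → R) : 0 ≤ x ⬝ᵥ A *ᵥ x := by
  rcases eq_or_ne x 0 with rfl | hx
  · simp
  · exact (hA x hx).le

theorem dotProduct_mulVec_self_pos_iff (hA : ∀ x : ι → R, x ≠ 0 → 0 < x ⬝ᵥ A *ᵥ x)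
    (x : ι → R) : 0 < x ⬝ᵥ A *ᵥ x ↔ x ≠ 0 := by
  refine ⟨fun hpos hx => ?_, hA x⟩
  simp [hx] at hpos

theorem mulVec_eq_zero_iff_of_galerkin (hA : ∀ x : ι → R, x ≠ 0 → 0 < x ⬝ᵥ A *ᵥ x)
    {P : Matrix ι κ R} {r : ι → R} {α : κ → R} (hα : (Pᵀ * A * P) *ᵥ α = Pᵀ *ᵥ r) :
    P *ᵥ α = 0 ↔ Pᵀ *ᵥ r = 0 := by
  constructor
  · intro hp
    rw [← hα, ← mulVec_mulVec, hp, mulVec_zero]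
  · intro hr
    by_contra hp
    have hpos := hA _ hp
    rw [mulVec_dotProduct_mulVec_of_galerkin hα, hr, dotProduct_zero] at hpos
    exact hpos.false

end Ordered

end Matrix

theorem stmt7_general {n s : ℕ} (A : Matrix (Fin n) (Fin n) ℝ)
    (hAsym : Aᵀ = A)
    (hApd : ∀ x : Fin n → ℝ, x ≠ 0 → 0 < x ⬝ᵥ (A *ᵥ x))
    (P : Matrix (Fin n) (Fin s) ℝ)
    (c xk rk : Fin n → ℝ) (hrk : rk = c - A *ᵥ xk)
    (αk : Fin s → ℝ) (hαk : (Pᵀ * A * P) *ᵥ αk = Pᵀ *ᵥ rk)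
    (Φ : (Fin n → ℝ) → ℝ)
    (hΦ : ∀ x, Φ x = (1 / 2) * (x ⬝ᵥ (A *ᵥ x)) - x ⬝ᵥ c)
    (xk1 : Fin n → ℝ) (hx : xk1 = xk + P *ᵥ αk) :
    Φ xk - Φ xk1 = (1 / 2) * (αk ⬝ᵥ (Pᵀ *ᵥ rk)) ∧
    0 ≤ (1 / 2) * (αk ⬝ᵥ (Pᵀ *ᵥ rk)) ∧
    (Φ xk1 < Φ xk ↔ Pᵀ *ᵥ rk ≠ 0) := by
  have hgalerkin := mulVec_dotProduct_mulVec_of_galerkin hαk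
  have hdecrease : Φ xk - Φ xk1 = (1 / 2) * (αk ⬝ᵥ (Pᵀ *ᵥ rk)) := by
    rw [hΦ, hΦ, hx, quadratic_energy_sub_energy_add hAsym, ← hrk, hgalerkin, dotProduct_comm,
      ← dotProduct_transpose_mulVec]
    ring
  refine ⟨hdecrease, ?_, ?_⟩
  · rw [← hgalerkin]
    have := dotProduct_mulVec_self_nonneg hApd (P *ᵥ αk)
    positivity
  · rw [← sub_pos, hdecrease, mul_pos_iff_of_pos_left one_half_pos, ← hgalerkin,
      dotProduct_mulVec_self_pos_iff hApd, Ne, mulVec_eq_zero_iff_of_galerkin hApd hαk]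

/-- Monotone decrease of the energy functional: with `αₖ` solving
`Pᵀ A P αₖ = Pᵀ rₖ` and `xₖ₊₁ = xₖ + P αₖ`, one has
`Φ(xₖ) − Φ(xₖ₊₁) = ½⟨αₖ, Pᵀ rₖ⟩ ≥ 0`, with strict decrease iff `Pᵀ rₖ ≠ 0`. -/
theorem stmt7 {n s : ℕ} (A : Matrix (Fin n) (Fin n) ℝ)
    (hAsym : Aᵀ = A)
    (hApd : ∀ x : Fin n → ℝ, x ≠ 0 → 0 < x ⬝ᵥ (A *ᵥ x))
    (P : Matrix (Fin n) (Fin s) ℝ)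
    (hP : Function.Injective fun α : Fin s → ℝ => P *ᵥ α)
    (c xk rk : Fin n → ℝ) (hrk : rk = c - A *ᵥ xk)
    (αk : Fin s → ℝ) (hαk : (Pᵀ * A * P) *ᵥ αk = Pᵀ *ᵥ rk)
    (Φ : (Fin n → ℝ) → ℝ)
    (hΦ : ∀ x, Φ x = (1 / 2) * (x ⬝ᵥ (A *ᵥ x)) - x ⬝ᵥ c)
    (xk1 : Fin n → ℝ) (hx : xk1 = xk + P *ᵥ αk) :
    Φ xk - Φ xk1 = (1 / 2) * (αk ⬝ᵥ (Pᵀ *ᵥ rk)) ∧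
    0 ≤ (1 / 2) * (αk ⬝ᵥ (Pᵀ *ᵥ rk)) ∧
    (Φ xk1 < Φ xk ↔ Pᵀ *ᵥ rk ≠ 0) :=
  stmt7_general A hAsym hApd P c xk rk hrk αk hαk Φ hΦ xk1 hx
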